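/- Let S be a convex compact subset of ℝ^M and f : ℝ^M → ℝ^M a map that is Lipschitz on S with constant L and satisfies the one-sided Lipschitz condition on S with constant λ = 0, i.e. ⟪f(y₁) − f(y₂), y₁ − y₂⟫ ≤ 0 for all y₁, y₂ ∈ S. Set C = sup_{y∈S} L·‖f(y)‖. Let y₀, z₀ ∈ S with ‖y₀ − z₀‖ ≤ ε, let y : [0,τ] → S solve y′(t) = f(y(t)) with y(0) = y₀, and let ỹ(t) = z₀ + t·f(z₀) be the explicit Euler approximation, assumed to remain in S for t ∈ [0,τ]. Then for all t ∈ [0,τ]: ‖y(t) − ỹ(t)‖ ≤ ( ε²·e^{t} + C²·( −t² − 2t + 2(e^{t} − 1) ) )^{1/2}. -/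

import Mathlib

open Set Real
open scoped RealInnerProductSpace

/-! The squared error `u(s) = ‖y(s) - ỹ(s)‖²` has derivative `2⟪y - ỹ, f(y) - f(z₀)⟫`. Comparing
`f(y)` with `f(ỹ)` costs nothing by the one-sided Lipschitz condition, and `f(ỹ(s)) - f(z₀)` has
norm at most `L s ‖f(z₀)‖ ≤ C s`; so `u' ≤ 2 C s √u ≤ u + C² s²`. The square `φ` of the claimed
bound solves `φ' = φ + C² s²`, `φ(0) = ε²`, hence `(u - φ)' ≤ u - φ` and Grönwall gives `u ≤ φ`. -/

theorem nonpos_of_hasDerivWithinAt_le_mul_self {u u' : ℝ → ℝ} {K a b : ℝ}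
    (hu : ContinuousOn u (Icc a b)) (hu' : ∀ x ∈ Ico a b, HasDerivWithinAt u (u' x) (Ici x) x)
    (ha : u a ≤ 0) (bound : ∀ x ∈ Ico a b, u' x ≤ K * u x) : ∀ x ∈ Icc a b, u x ≤ 0 := by
  intro x hx
  simpa only [gronwallBound_ε0_δ0] using
    le_gronwallBound_of_liminf_deriv_right_le (δ := 0) (K := K) (ε := 0) hu
      (fun x hx _ hr => (hu' x hx).liminf_right_slope_le hr) ha
      (fun x hx => by simpa only [add_zero] using bound x hx) x hx

section EulerStep

variable {E : Type*} [NormedAddCommGroup E] [InnerProductSpace ℝ E] {S : Set E} {f : E → E}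
  {L C s : ℝ}

theorem norm_apply_euler_sub_le (hLip : ∀ y₁ ∈ S, ∀ y₂ ∈ S, ‖f y₁ - f y₂‖ ≤ L * ‖y₁ - y₂‖)
    {z : E} (hz : z ∈ S) (hzs : z + s • f z ∈ S) (hs : 0 ≤ s) (hC : L * ‖f z‖ ≤ C) :
    ‖f (z + s • f z) - f z‖ ≤ C * s :=
  calc ‖f (z + s • f z) - f z‖ ≤ L * ‖z + s • f z - z‖ := hLip _ hzs _ hz
    _ = L * ‖f z‖ * s := by
      rw [add_sub_cancel_left, norm_smul, norm_of_nonneg hs]; ring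
    _ ≤ C * s := mul_le_mul_of_nonneg_right hC hs

theorem two_inner_sub_euler_le (hLip : ∀ y₁ ∈ S, ∀ y₂ ∈ S, ‖f y₁ - f y₂‖ ≤ L * ‖y₁ - y₂‖)
    (hOSL : ∀ y₁ ∈ S, ∀ y₂ ∈ S, ⟪f y₁ - f y₂, y₁ - y₂⟫ ≤ (0 : ℝ))
    {p z : E} (hp : p ∈ S) (hz : z ∈ S) (hzs : z + s • f z ∈ S) (hs : 0 ≤ s)
    (hC : L * ‖f z‖ ≤ C) :
    2 * ⟪p - (z + s • f z), f p - f z⟫ ≤ ‖p - (z + s • f z)‖ ^ 2 + C ^ 2 * s ^ 2 := by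
  set q := z + s • f z
  have hsplit : f p - f z = (f p - f q) + (f q - f z) := by abel
  have hinner : ⟪p - q, f p - f z⟫ ≤ ‖p - q‖ * (C * s) :=
    calc ⟪p - q, f p - f z⟫ = ⟪f p - f q, p - q⟫ + ⟪p - q, f q - f z⟫ := by
          rw [hsplit, inner_add_right, real_inner_comm]
      _ ≤ 0 + ‖p - q‖ * ‖f q - f z‖ :=
          add_le_add (hOSL _ hp _ hzs) (real_inner_le_norm _ _)
      _ ≤ ‖p - q‖ * (C * s) := by
          rw [zero_add]
          exact mul_le_mul_of_nonneg_left
            (norm_apply_euler_sub_le hLip hz hzs hs hC) (norm_nonneg _)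
  nlinarith [two_mul_le_add_sq ‖p - q‖ (C * s)]

end EulerStep

noncomputable def eulerErrorBound (ε C t : ℝ) : ℝ :=
  ε ^ 2 * exp t + C ^ 2 * (-t ^ 2 - 2 * t + 2 * (exp t - 1))

theorem eulerErrorBound_zero (ε C : ℝ) : eulerErrorBound ε C 0 = ε ^ 2 := by
  simp [eulerErrorBound]

theorem hasDerivAt_eulerErrorBound (ε C t : ℝ) :
    HasDerivAt (eulerErrorBound ε C) (eulerErrorBound ε C t + C ^ 2 * t ^ 2) t := by
  have hpoly : HasDerivAt (fun s : ℝ => -s ^ 2 - 2 * s + 2 * (exp s - 1))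
      (-(2 * t) - 2 + 2 * exp t) t := by
    simpa using (((hasDerivAt_pow 2 t).fun_neg.fun_sub ((hasDerivAt_id' t).const_mul 2)).fun_add
      (((hasDerivAt_exp t).sub_const 1).const_mul 2))
  exact (((hasDerivAt_exp t).const_mul (ε ^ 2)).fun_add (hpoly.const_mul (C ^ 2))).congr_deriv
    (by rw [eulerErrorBound]; ring)

theorem euler_error_bound_zero_osl_general {M : ℕ}
    (S : Set (EuclideanSpace ℝ (Fin M)))
    (f : EuclideanSpace ℝ (Fin M) → EuclideanSpace ℝ (Fin M))
    (L C ε τ : ℝ)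
    (hLip : ∀ y₁ ∈ S, ∀ y₂ ∈ S, ‖f y₁ - f y₂‖ ≤ L * ‖y₁ - y₂‖)
    (hOSL : ∀ y₁ ∈ S, ∀ y₂ ∈ S,
      ⟪f y₁ - f y₂, y₁ - y₂⟫ ≤ (0 : ℝ))
    (hC : IsLUB ((fun y => L * ‖f y‖) '' S) C)
    (y₀ z₀ : EuclideanSpace ℝ (Fin M)) (hz₀S : z₀ ∈ S)
    (hyz : ‖y₀ - z₀‖ ≤ ε)
    (y : ℝ → EuclideanSpace ℝ (Fin M))
    (hy0 : y 0 = y₀)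
    (hyS : ∀ t ∈ Icc (0 : ℝ) τ, y t ∈ S)
    (hy' : ∀ t ∈ Icc (0 : ℝ) τ, HasDerivAt y (f (y t)) t)
    (hEulerS : ∀ t ∈ Icc (0 : ℝ) τ, z₀ + t • f z₀ ∈ S) :
    ∀ t ∈ Icc (0 : ℝ) τ,
      ‖y t - (z₀ + t • f z₀)‖ ≤
        Real.sqrt (ε ^ 2 * Real.exp t +
          C ^ 2 * (-t ^ 2 - 2 * t + 2 * (Real.exp t - 1))) := by
  intro t ht
  show _ ≤ √(eulerErrorBound ε C t)
  set u : ℝ → ℝ := fun s => ‖y s - (z₀ + s • f z₀)‖ ^ 2 - eulerErrorBound ε C s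
  have hu' : ∀ s ∈ Icc 0 τ, HasDerivAt u (2 * ⟪y s - (z₀ + s • f z₀), f (y s) - f z₀⟫ -
      (eulerErrorBound ε C s + C ^ 2 * s ^ 2)) s := fun s hs => by
    simpa only [one_smul] using
      ((hy' s hs).fun_sub (((hasDerivAt_id' s).smul_const (f z₀)).const_add z₀)).norm_sq.fun_sub
        (hasDerivAt_eulerErrorBound ε C s)
  have hu : ∀ s ∈ Icc 0 τ, u s ≤ 0 := by
    refine nonpos_of_hasDerivWithinAt_le_mul_self (K := 1)
      (fun s hs => (hu' s hs).continuousAt.continuousWithinAt)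
      (fun s hs => (hu' s (Ico_subset_Icc_self hs)).hasDerivWithinAt) ?_ fun s hs => ?_
    · simp only [u, hy0, zero_smul, add_zero, eulerErrorBound_zero]
      exact sub_nonpos.2 (pow_le_pow_left₀ (norm_nonneg _) hyz 2)
    · have hs' := Ico_subset_Icc_self hs
      have hkey := two_inner_sub_euler_le hLip hOSL (hyS s hs') hz₀S (hEulerS s hs') hs.1
        (hC.1 ⟨z₀, hz₀S, rfl⟩)
      simp only [u]
      linarith
  exact Real.le_sqrt_of_sq_le (by linarith [hu t ht])

/-- Euler error bound for a one-sided Lipschitz vector field with zero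
OSL constant (Proposition 1, case `λ = 0`). -/
theorem euler_error_bound_zero_osl {M : ℕ}
    (S : Set (EuclideanSpace ℝ (Fin M)))
    (hSconv : Convex ℝ S) (hScomp : IsCompact S)
    (f : EuclideanSpace ℝ (Fin M) → EuclideanSpace ℝ (Fin M))
    (L C ε τ : ℝ)
    (hLip : ∀ y₁ ∈ S, ∀ y₂ ∈ S, ‖f y₁ - f y₂‖ ≤ L * ‖y₁ - y₂‖)
    (hOSL : ∀ y₁ ∈ S, ∀ y₂ ∈ S,
      ⟪f y₁ - f y₂, y₁ - y₂⟫ ≤ (0 : ℝ))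
    (hC : IsLUB ((fun y => L * ‖f y‖) '' S) C)
    (y₀ z₀ : EuclideanSpace ℝ (Fin M)) (hy₀S : y₀ ∈ S) (hz₀S : z₀ ∈ S)
    (hyz : ‖y₀ - z₀‖ ≤ ε)
    (y : ℝ → EuclideanSpace ℝ (Fin M))
    (hy0 : y 0 = y₀)
    (hyS : ∀ t ∈ Icc (0 : ℝ) τ, y t ∈ S)
    (hy' : ∀ t ∈ Icc (0 : ℝ) τ, HasDerivAt y (f (y t)) t)
    (hEulerS : ∀ t ∈ Icc (0 : ℝ) τ, z₀ + t • f z₀ ∈ S) :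
    ∀ t ∈ Icc (0 : ℝ) τ,
      ‖y t - (z₀ + t • f z₀)‖ ≤
        Real.sqrt (ε ^ 2 * Real.exp t +
          C ^ 2 * (-t ^ 2 - 2 * t + 2 * (Real.exp t - 1))) :=
  euler_error_bound_zero_osl_general S f L C ε τ hLip hOSL hC y₀ z₀ hz₀S hyz y hy0 hyS hy' hEulerS
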